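/- Suppose a matching market of size n has no non-trivial fragments and possesses a trivial fragment (F̄, W̄). Then the submarket induced on the remaining agents (F \ F̄) ∪ (W \ W̄), with the restricted preferences, also has no non-trivial fragments. -/
import Mathlib


/-- A matching market with firm set `F` and worker set `W` (general types, so that
submarkets can be formed by passing to subtypes).  `fpref f w` is the rank firm `f`
assigns to worker `w` (smaller = more preferred); injectivity makes each preference
a strict total order.  All pairs are mutually acceptable. -/
structure Market (F W : Type*) where
  fpref : F → W → ℕ
  wpref : W → F → ℕ
  fpref_inj : ∀ f, Function.Injective (fpref f)
  wpref_inj : ∀ w, Function.Injective (wpref w)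

/-- A (possibly partial) one-to-one matching between firms and workers. -/
structure Matching (F W : Type*) where
  mf : F → Option W
  mw : W → Option F
  consistent : ∀ f w, mf f = some w ↔ mw w = some f

variable {F W : Type*}

/-- Firm `f` strictly prefers worker `w` to the (optional) partner `o`. -/
def FPrefOver (M : Market F W) (f : F) (w : W) (o : Option W) : Prop :=
  ∀ w' ∈ o, M.fpref f w < M.fpref f w'

/-- Worker `w` strictly prefers firm `f` to the (optional) partner `o`. -/
def WPrefOver (M : Market F W) (w : W) (f : F) (o : Option F) : Prop :=
  ∀ f' ∈ o, M.wpref w f < M.wpref w f'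

/-- `(f, w)` is a blocking pair of `μ`. -/
def Blocking (M : Market F W) (μ : Matching F W) (f : F) (w : W) : Prop :=
  μ.mf f ≠ some w ∧ FPrefOver M f w (μ.mf f) ∧ WPrefOver M w f (μ.mw w)

/-- A matching is stable if it admits no blocking pair. -/
def Stable (M : Market F W) (μ : Matching F W) : Prop :=
  ∀ f w, ¬ Blocking M μ f w

/-- The submarket induced on `(Fs, Ws)`, with the restricted preferences. -/
def Market.restrict (M : Market F W) (Fs : Finset F) (Ws : Finset W) :
    Market {f // f ∈ Fs} {w // w ∈ Ws} where
  fpref f w := M.fpref f.1 w.1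
  wpref w f := M.wpref w.1 f.1
  fpref_inj f _ _ h := Subtype.ext (M.fpref_inj f.1 h)
  wpref_inj w _ _ h := Subtype.ext (M.wpref_inj w.1 h)

variable [Fintype F] [Fintype W] [DecidableEq F] [DecidableEq W]

/-- The matching `m` induces the fragment `(Fb, Wb)`: `Fb ⊊ F` and `Wb ⊊ W` have
equal size, `m` matches `Fb` bijectively into `Wb`, this matching is stable in the
submarket induced on `Fb ∪ Wb`, every firm of the fragment prefers its partner to
every worker outside `Wb`, and every worker of the fragment prefers its partner to
every firm outside `Fb`. -/
def InducesFragment (M : Market F W) (Fb : Finset F) (Wb : Finset W) (m : F → W) : Prop :=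
  Fb ≠ Finset.univ ∧ Wb ≠ Finset.univ ∧ Fb.card = Wb.card ∧
  (∀ f ∈ Fb, m f ∈ Wb) ∧ Set.InjOn m ↑Fb ∧
  (∀ f ∈ Fb, ∀ f' ∈ Fb,
    M.fpref f (m f') < M.fpref f (m f) → M.wpref (m f') f' < M.wpref (m f') f) ∧
  (∀ f ∈ Fb, ∀ w, w ∉ Wb → M.fpref f (m f) < M.fpref f w) ∧
  (∀ f ∈ Fb, ∀ f', f' ∉ Fb → M.wpref (m f) f < M.wpref (m f) f')

/-- `(Fb, Wb)` is a fragment of the market `M`. -/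
def IsFragment (M : Market F W) (Fb : Finset F) (Wb : Finset W) : Prop :=
  ∃ m, InducesFragment M Fb Wb m

/-- All stable matchings of the market agree on how they match the agents of
`(Fb, Wb)`; a fragment with this property is trivial. -/
def AgreeOnFragment (M : Market F W) (Fb : Finset F) (Wb : Finset W) : Prop :=
  ∀ μ μ' : Matching F W, Stable M μ → Stable M μ' →
    (∀ f ∈ Fb, μ.mf f = μ'.mf f) ∧ (∀ w ∈ Wb, μ.mw w = μ'.mw w)

/-- The market has no non-trivial fragments. -/
def NoNontrivialFragments (M : Market F W) : Prop :=
  ∀ Fb Wb, IsFragment M Fb Wb → AgreeOnFragment M Fb Wb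

/-- Any stable matching of the submarket on the complement of a fragment extends to a
stable matching of the whole market. -/
lemma exists_ext {M : Market F W} {Fb : Finset F} {Wb : Finset W} {m : F → W}
    (hm : InducesFragment M Fb Wb m)
    (μ : Matching {f // f ∈ Fbᶜ} {w // w ∈ Wbᶜ}) (hμ : Stable (M.restrict Fbᶜ Wbᶜ) μ) :
    ∃ ν : Matching F W, Stable M ν ∧
      (∀ f : {f // f ∈ Fbᶜ}, ν.mf f.1 = Option.map Subtype.val (μ.mf f)) ∧
      (∀ w : {w // w ∈ Wbᶜ}, ν.mw w.1 = Option.map Subtype.val (μ.mw w)) := by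
  obtain ⟨h1, h2, h3, h4, h5, h6, h7, h8⟩ := hm
  have hsurj : ∀ w ∈ Wb, ∃ f, f ∈ Fb ∧ m f = w := by
    have himg : Fb.image m = Wb := by
      apply Finset.eq_of_subset_of_card_le
      · intro w hw
        obtain ⟨f, hf, rfl⟩ := Finset.mem_image.mp hw
        exact h4 f hf
      · rw [Finset.card_image_of_injOn h5, h3]
    intro w hw
    rw [← himg] at hw
    obtain ⟨f, hf, hfw⟩ := Finset.mem_image.mp hw
    exact ⟨f, hf, hfw⟩
  choose inv hinvF hinvm using hsurj
  have hinv_m : ∀ f (hf : f ∈ Fb), inv (m f) (h4 f hf) = f := by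
    intro f hf
    exact h5 (Finset.mem_coe.mpr (hinvF _ _)) (Finset.mem_coe.mpr hf) (hinvm _ _)
  refine ⟨⟨fun f => if h : f ∈ Fb then some (m f)
            else Option.map Subtype.val (μ.mf ⟨f, Finset.mem_compl.mpr h⟩),
          fun w => if h : w ∈ Wb then some (inv w h)
            else Option.map Subtype.val (μ.mw ⟨w, Finset.mem_compl.mpr h⟩), ?_⟩, ?_, ?_, ?_⟩
  · -- consistency
    intro f w
    by_cases hf : f ∈ Fb <;> by_cases hw : w ∈ Wb <;>
      simp only [dif_pos, dif_neg, hf, hw, not_false_iff, Option.some_inj]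
    · constructor
      · rintro rfl; exact hinv_m f hf
      · rintro rfl; exact hinvm w hw
    · constructor
      · rintro rfl; exact absurd (h4 f hf) hw
      · intro h
        obtain ⟨a, _, rfl⟩ := Option.map_eq_some_iff.mp h
        exact absurd hf (Finset.mem_compl.mp a.2)
    · constructor
      · intro h
        obtain ⟨a, _, rfl⟩ := Option.map_eq_some_iff.mp h
        exact absurd hw (Finset.mem_compl.mp a.2)
      · rintro rfl; exact absurd (hinvF w hw) hf
    · rw [Option.map_eq_some_iff, Option.map_eq_some_iff]
      constructor
      · rintro ⟨a, ha, rfl⟩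
        exact ⟨⟨f, Finset.mem_compl.mpr hf⟩, (μ.consistent _ _).mp ha, rfl⟩
      · rintro ⟨a, ha, rfl⟩
        exact ⟨⟨w, Finset.mem_compl.mpr hw⟩, (μ.consistent _ _).mpr ha, rfl⟩
  · -- stability
    intro f w hblock
    obtain ⟨hne, hfp, hwp⟩ := hblock
    by_cases hf : f ∈ Fb <;> by_cases hw : w ∈ Wb
    · have hfw : M.fpref f w < M.fpref f (m f) := by
        have := hfp (m f) (by simp [hf])
        exact this
      have hwinv : M.wpref w f < M.wpref w (inv w hw) := by
        have := hwp (inv w hw) (by simp [hw])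
        exact this
      have := h6 f hf (inv w hw) (hinvF w hw) (by rw [hinvm w hw]; exact hfw)
      rw [hinvm w hw] at this
      omega
    · have hfw : M.fpref f w < M.fpref f (m f) := hfp (m f) (by simp [hf])
      have := h7 f hf w hw
      omega
    · have hwinv : M.wpref w f < M.wpref w (inv w hw) := hwp (inv w hw) (by simp [hw])
      have := h8 (inv w hw) (hinvF w hw) f hf
      rw [hinvm w hw] at this
      omega
    · refine hμ ⟨f, Finset.mem_compl.mpr hf⟩ ⟨w, Finset.mem_compl.mpr hw⟩ ⟨?_, ?_, ?_⟩
      · intro h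
        apply hne
        simp only [dif_neg, hf, not_false_iff]
        rw [h]; rfl
      · intro w' hw'
        have : (w' : W) ∈ (if h : f ∈ Fb then some (m f)
            else Option.map Subtype.val (μ.mf ⟨f, Finset.mem_compl.mpr h⟩)) := by
          simp only [dif_neg, hf, not_false_iff]
          exact Option.mem_map_of_mem _ hw'
        exact hfp w'.1 this
      · intro f' hf'
        have : (f' : F) ∈ (if h : w ∈ Wb then some (inv w h)
            else Option.map Subtype.val (μ.mw ⟨w, Finset.mem_compl.mpr h⟩)) := by
          simp only [dif_neg, hw, not_false_iff]
          exact Option.mem_map_of_mem _ hf'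
        exact hwp f'.1 this
  · intro f
    have hf : f.1 ∉ Fb := Finset.mem_compl.mp f.2
    simp only [dif_neg, hf, not_false_iff]
  · intro w
    have hw : w.1 ∉ Wb := Finset.mem_compl.mp w.2
    simp only [dif_neg, hw, not_false_iff]

/-- A fragment of the complementary submarket unions with the original fragment to
give a fragment of the whole market. -/
lemma union_frag {M : Market F W} {Fb : Finset F} {Wb : Finset W} {m : F → W}
    (hm : InducesFragment M Fb Wb m)
    {Fb' : Finset {f // f ∈ Fbᶜ}} {Wb' : Finset {w // w ∈ Wbᶜ}}
    {m' : {f // f ∈ Fbᶜ} → {w // w ∈ Wbᶜ}}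
    (hm' : InducesFragment (M.restrict Fbᶜ Wbᶜ) Fb' Wb' m') :
    InducesFragment M (Fb ∪ Fb'.image Subtype.val) (Wb ∪ Wb'.image Subtype.val)
      (fun f => if h : f ∈ Fbᶜ then (m' ⟨f, h⟩).1 else m f) := by
  obtain ⟨h1, h2, h3, h4, h5, h6, h7, h8⟩ := hm
  obtain ⟨g1, g2, g3, g4, g5, g6, g7, g8⟩ := hm'
  have hFmem : ∀ (a : F) (h : a ∈ Fbᶜ), (a ∈ Fb'.image Subtype.val ↔ ⟨a, h⟩ ∈ Fb') := by
    intro a h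
    constructor
    · intro ha
      obtain ⟨b, hb, hba⟩ := Finset.mem_image.mp ha
      rwa [show (⟨a, h⟩ : {f // f ∈ Fbᶜ}) = b from Subtype.ext hba.symm]
    · intro ha
      exact Finset.mem_image.mpr ⟨⟨a, h⟩, ha, rfl⟩
  have hWmem : ∀ (a : W) (h : a ∈ Wbᶜ), (a ∈ Wb'.image Subtype.val ↔ ⟨a, h⟩ ∈ Wb') := by
    intro a h
    constructor
    · intro ha
      obtain ⟨b, hb, hba⟩ := Finset.mem_image.mp ha
      rwa [show (⟨a, h⟩ : {w // w ∈ Wbᶜ}) = b from Subtype.ext hba.symm]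
    · intro ha
      exact Finset.mem_image.mpr ⟨⟨a, h⟩, ha, rfl⟩
  have hdF : Disjoint Fb (Fb'.image Subtype.val) := by
    rw [Finset.disjoint_left]
    intro a ha hai
    obtain ⟨b, _, hba⟩ := Finset.mem_image.mp hai
    exact Finset.mem_compl.mp (hba ▸ b.2) ha
  have hdW : Disjoint Wb (Wb'.image Subtype.val) := by
    rw [Finset.disjoint_left]
    intro a ha hai
    obtain ⟨b, _, hba⟩ := Finset.mem_image.mp hai
    exact Finset.mem_compl.mp (hba ▸ b.2) ha
  refine ⟨?_, ?_, ?_, ?_, ?_, ?_, ?_, ?_⟩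
  · -- ≠ univ
    intro hcontra
    obtain ⟨f0, hf0⟩ : ∃ f0 : {f // f ∈ Fbᶜ}, f0 ∉ Fb' := by
      by_contra hall
      push_neg at hall
      exact g1 (Finset.eq_univ_iff_forall.mpr hall)
    have : f0.1 ∈ Fb ∪ Fb'.image Subtype.val := hcontra ▸ Finset.mem_univ _
    rcases Finset.mem_union.mp this with h | h
    · exact Finset.mem_compl.mp f0.2 h
    · exact hf0 ((hFmem f0.1 f0.2).mp h)
  · intro hcontra
    obtain ⟨w0, hw0⟩ : ∃ w0 : {w // w ∈ Wbᶜ}, w0 ∉ Wb' := by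
      by_contra hall
      push_neg at hall
      exact g2 (Finset.eq_univ_iff_forall.mpr hall)
    have : w0.1 ∈ Wb ∪ Wb'.image Subtype.val := hcontra ▸ Finset.mem_univ _
    rcases Finset.mem_union.mp this with h | h
    · exact Finset.mem_compl.mp w0.2 h
    · exact hw0 ((hWmem w0.1 w0.2).mp h)
  · rw [Finset.card_union_of_disjoint hdF, Finset.card_union_of_disjoint hdW,
      Finset.card_image_of_injective _ Subtype.val_injective,
      Finset.card_image_of_injective _ Subtype.val_injective, h3, g3]
  · -- maps into the union
    intro f hf
    by_cases hfc : f ∈ Fbᶜ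
    · simp only [dif_pos hfc]
      have hf' : (⟨f, hfc⟩ : {f // f ∈ Fbᶜ}) ∈ Fb' := by
        rcases Finset.mem_union.mp hf with h | h
        · exact absurd h (Finset.mem_compl.mp hfc)
        · exact (hFmem f hfc).mp h
      exact Finset.mem_union_right _ (Finset.mem_image.mpr ⟨_, g4 _ hf', rfl⟩)
    · simp only [dif_neg hfc]
      exact Finset.mem_union_left _ (h4 f (by simpa using hfc))
  · -- injectivity
    intro a ha b hb hab
    simp only [Finset.coe_union, Set.mem_union, Finset.mem_coe] at ha hb
    by_cases hac : a ∈ Fbᶜ <;> by_cases hbc : b ∈ Fbᶜ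
    · simp only [dif_pos hac, dif_pos hbc] at hab
      have ha' : (⟨a, hac⟩ : {f // f ∈ Fbᶜ}) ∈ Fb' := by
        rcases ha with h | h
        · exact absurd h (Finset.mem_compl.mp hac)
        · exact (hFmem a hac).mp h
      have hb' : (⟨b, hbc⟩ : {f // f ∈ Fbᶜ}) ∈ Fb' := by
        rcases hb with h | h
        · exact absurd h (Finset.mem_compl.mp hbc)
        · exact (hFmem b hbc).mp h
      have := g5 (Finset.mem_coe.mpr ha') (Finset.mem_coe.mpr hb') (Subtype.ext hab)
      exact congrArg Subtype.val this
    · simp only [dif_pos hac, dif_neg hbc] at hab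
      have hbF : b ∈ Fb := by simpa using hbc
      have h1' : (m' ⟨a, hac⟩).1 ∈ Wbᶜ := (m' ⟨a, hac⟩).2
      rw [hab] at h1'
      exact absurd (h4 b hbF) (Finset.mem_compl.mp h1')
    · simp only [dif_neg hac, dif_pos hbc] at hab
      have haF : a ∈ Fb := by simpa using hac
      have h1' : (m' ⟨b, hbc⟩).1 ∈ Wbᶜ := (m' ⟨b, hbc⟩).2
      rw [← hab] at h1'
      exact absurd (h4 a haF) (Finset.mem_compl.mp h1')
    · simp only [dif_neg hac, dif_neg hbc] at hab
      exact h5 (Finset.mem_coe.mpr (by simpa using hac))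
        (Finset.mem_coe.mpr (by simpa using hbc)) hab
  · -- internal stability
    intro f hf f' hf' hpref
    by_cases hfc : f ∈ Fbᶜ <;> by_cases hfc' : f' ∈ Fbᶜ
    · -- both outside Fb : use g6
      simp only [dif_pos hfc, dif_pos hfc'] at hpref ⊢
      have hfF : (⟨f, hfc⟩ : {f // f ∈ Fbᶜ}) ∈ Fb' := by
        rcases Finset.mem_union.mp hf with h | h
        · exact absurd h (Finset.mem_compl.mp hfc)
        · exact (hFmem f hfc).mp h
      have hfF' : (⟨f', hfc'⟩ : {f // f ∈ Fbᶜ}) ∈ Fb' := by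
        rcases Finset.mem_union.mp hf' with h | h
        · exact absurd h (Finset.mem_compl.mp hfc')
        · exact (hFmem f' hfc').mp h
      exact g6 _ hfF _ hfF' hpref
    · -- f outside Fb, f' in Fb : use h8
      simp only [dif_pos hfc, dif_neg hfc'] at hpref ⊢
      exact h8 f' (by simpa using hfc') f (Finset.mem_compl.mp hfc)
    · -- f in Fb, f' outside : impossible by h7
      simp only [dif_neg hfc, dif_pos hfc'] at hpref ⊢
      have hw : (m' ⟨f', hfc'⟩).1 ∉ Wb := Finset.mem_compl.mp (m' ⟨f', hfc'⟩).2
      have := h7 f (by simpa using hfc) _ hw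
      omega
    · -- both in Fb : use h6
      simp only [dif_neg hfc, dif_neg hfc'] at hpref ⊢
      exact h6 f (by simpa using hfc) f' (by simpa using hfc') hpref
  · -- prefers partner to workers outside the union
    intro f hf w hw
    have hwWb : w ∉ Wb := fun h => hw (Finset.mem_union_left _ h)
    by_cases hfc : f ∈ Fbᶜ
    · simp only [dif_pos hfc]
      have hfF : (⟨f, hfc⟩ : {f // f ∈ Fbᶜ}) ∈ Fb' := by
        rcases Finset.mem_union.mp hf with h | h
        · exact absurd h (Finset.mem_compl.mp hfc)
        · exact (hFmem f hfc).mp h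
      have hwc : w ∈ Wbᶜ := Finset.mem_compl.mpr hwWb
      have hwW' : (⟨w, hwc⟩ : {w // w ∈ Wbᶜ}) ∉ Wb' := by
        intro hcontra
        exact hw (Finset.mem_union_right _ ((hWmem w hwc).mpr hcontra))
      exact g7 _ hfF ⟨w, hwc⟩ hwW'
    · simp only [dif_neg hfc]
      exact h7 f (by simpa using hfc) w hwWb
  · -- worker prefers partner to firms outside the union
    intro f hf f' hf'
    have hfFb' : f' ∉ Fb := fun h => hf' (Finset.mem_union_left _ h)
    by_cases hfc : f ∈ Fbᶜ
    · simp only [dif_pos hfc]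
      have hfF : (⟨f, hfc⟩ : {f // f ∈ Fbᶜ}) ∈ Fb' := by
        rcases Finset.mem_union.mp hf with h | h
        · exact absurd h (Finset.mem_compl.mp hfc)
        · exact (hFmem f hfc).mp h
      have hfc' : f' ∈ Fbᶜ := Finset.mem_compl.mpr hfFb'
      have hfF' : (⟨f', hfc'⟩ : {f // f ∈ Fbᶜ}) ∉ Fb' := by
        intro hcontra
        exact hf' (Finset.mem_union_right _ ((hFmem f' hfc').mpr hcontra))
      exact g8 _ hfF ⟨f', hfc'⟩ hfF'
    · simp only [dif_neg hfc]
      exact h8 f (by simpa using hfc) f' hfFb'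

/-- **Lemma 2**: if a balanced market has no non-trivial fragments and `(Fb, Wb)`
is a (necessarily trivial) fragment, then the submarket induced on the remaining
agents also has no non-trivial fragments. -/
theorem stmt8 (M : Market F W) (n : ℕ)
    (hF : Fintype.card F = n) (hW : Fintype.card W = n)
    (hno : NoNontrivialFragments M)
    (Fb : Finset F) (Wb : Finset W) (hfrag : IsFragment M Fb Wb)
    (htriv : AgreeOnFragment M Fb Wb) :
    NoNontrivialFragments (M.restrict Fbᶜ Wbᶜ) := by
  obtain ⟨m, hm⟩ := hfrag
  intro Fb' Wb' hfrag' μ μ' hμ hμ'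
  obtain ⟨m', hm'⟩ := hfrag'
  obtain ⟨ν, hνs, hνf, hνw⟩ := exists_ext hm μ hμ
  obtain ⟨ν', hν's, hν'f, hν'w⟩ := exists_ext hm μ' hμ'
  have hufrag := union_frag hm hm'
  have hagree := hno _ _ ⟨_, hufrag⟩ ν ν' hνs hν's
  constructor
  · intro f hf
    have hmem : f.1 ∈ Fb ∪ Fb'.image Subtype.val :=
      Finset.mem_union_right _ (Finset.mem_image.mpr ⟨f, hf, rfl⟩)
    have h := hagree.1 f.1 hmem
    rw [hνf f, hν'f f] at h
    exact Option.map_injective Subtype.val_injective h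
  · intro w hw
    have hmem : w.1 ∈ Wb ∪ Wb'.image Subtype.val :=
      Finset.mem_union_right _ (Finset.mem_image.mpr ⟨w, hw, rfl⟩)
    have h := hagree.2 w.1 hmem
    rw [hνw w, hν'w w] at h
    exact Option.map_injective Subtype.val_injective h
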